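/- Let (n_i)_{i≥1} be a sequence of positive integers with n_1 ≥ 2, define u_0 = ε and u_i = u_{i-1} a (u_{i-1} b)^{n_i} u_{i-1} over {a,b}, let U be the infinite word having every u_i as a prefix, and for j ≥ 1 set d_j = |u_{j-1} a u_{j-2} a ⋯ u_1 a a|. Then the local period of U at position d_j equals (n_j + 1)(|u_{j-1}| + 1) for every j ≥ 1. -/

import Mathlib

open scoped BigOperators ENNReal

namespace PeriodicityComplexity

variable {A : Type*}

/-- The finite word `z` occurs in the infinite word `w` at the (0-based) index `j`,
i.e. `z` occupies positions `j+1, …, j+|z|` of `w`. -/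
def OccursAt (w : ℕ → A) (z : List A) (j : ℕ) : Prop :=
  z = List.ofFn (fun t : Fin z.length => w (j + t))

/-- `z` is a (finite) factor of the infinite word `w`. -/
def IsFactor (w : ℕ → A) (z : List A) : Prop := ∃ j, OccursAt w z j

/-- An infinite word is uniformly recurrent if every factor occurs with bounded gaps. -/
def UniformlyRecurrent (w : ℕ → A) : Prop :=
  ∀ z : List A, IsFactor w z → ∃ N : ℕ, ∀ j : ℕ, ∃ t, j ≤ t ∧ t < j + N ∧ OccursAt w z t

/-- An infinite word is periodic if some `p ≥ 1` is a period of all of it. -/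
def Periodic (w : ℕ → A) : Prop := ∃ p : ℕ, 1 ≤ p ∧ ∀ i, w (i + p) = w i

/-- An infinite word is ultimately periodic if some `p ≥ 1` is a period from some point on. -/
def UltimatelyPeriodic (w : ℕ → A) : Prop :=
  ∃ p : ℕ, 1 ≤ p ∧ ∃ N : ℕ, ∀ i, N ≤ i → w (i + p) = w i

/-- The `e`-fold concatenation `v^e` of a finite word `v`. -/
def wpow (v : List A) (e : ℕ) : List A := (List.replicate e v).flatten

/-- The prefix of length `i` of an infinite word. -/
def wordPrefix (w : ℕ → A) (i : ℕ) : List A := List.ofFn (fun t : Fin i => w t)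

/-- `r` is a repetition word at position `i` of the infinite word `w` (`w = uv`, `|u| = i`):
`r` is nonempty, suffix-comparable with `u`, and a prefix of the infinite remainder `v`. -/
def IsRepWordAt (w : ℕ → A) (i : ℕ) (r : List A) : Prop :=
  r ≠ [] ∧ (r <:+ wordPrefix w i ∨ wordPrefix w i <:+ r) ∧ OccursAt w r i

/-- Local period of an infinite word at position `i`, as an extended nonnegative real
(`⊤` if there is no repetition word at that position). -/
noncomputable def localPeriod (w : ℕ → A) (i : ℕ) : ℝ≥0∞ :=
  sInf ((fun r : List A => (r.length : ℝ≥0∞)) '' {r | IsRepWordAt w i r})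

/-- Periodicity complexity `h_w(i) = (1/i) ∑_{j=1}^{i} p_w(j)` of an infinite word. -/
noncomputable def pcomplexity (w : ℕ → A) (i : ℕ) : ℝ≥0∞ :=
  (∑ j ∈ Finset.Icc 1 i, localPeriod w j) / (i : ℝ≥0∞)

/-- `r` is a repetition word at position `i` of the finite word `v` (`v = xy`, `|x| = i`):
`r` is nonempty, suffix-comparable with `x` and prefix-comparable with `y`. -/
def IsRepWordAtF (v : List A) (i : ℕ) (r : List A) : Prop :=
  r ≠ [] ∧ (r <:+ v.take i ∨ v.take i <:+ r) ∧ (r <+: v.drop i ∨ v.drop i <+: r)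

/-- Local period of a finite word at position `i`. -/
noncomputable def localPeriodF (v : List A) (i : ℕ) : ℕ :=
  sInf {n : ℕ | ∃ r : List A, IsRepWordAtF v i r ∧ r.length = n}

/-- Average local period `h(v) = (1/|v|) ∑_{i=1}^{|v|} p_v(i)` of a finite word. -/
noncomputable def hF (v : List A) : ℝ :=
  (∑ i ∈ Finset.Icc 1 v.length, (localPeriodF v i : ℝ)) / (v.length : ℝ)

/-- An infinite word is of bounded repetition if the exponents of powers of nonempty
words occurring in it are bounded. -/
def BoundedRepetition (w : ℕ → A) : Prop :=
  ∃ E : ℕ, ∀ (v : List A) (e : ℕ), v ≠ [] → IsFactor w (wpow v e) → e ≤ E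

/-- `p` is a period of the finite word `z`. -/
def HasPeriodF (z : List A) (p : ℕ) : Prop :=
  ∀ t : ℕ, t + p < z.length → z[t]? = z[t + p]?

/-- The (least) period of a finite word. -/
noncomputable def periodF (z : List A) : ℕ := sInf {p : ℕ | 1 ≤ p ∧ HasPeriodF z p}

/-- `r` is a return word to `z` in the infinite word `w`: `r` is the factor of `w` between
two consecutive occurrences of `z`. -/
def IsReturnWord (w : ℕ → A) (z r : List A) : Prop :=
  r ≠ [] ∧ ∃ j : ℕ, OccursAt w z j ∧ OccursAt w z (j + r.length) ∧
    (∀ t, j < t → t < j + r.length → ¬ OccursAt w z t) ∧ OccursAt w r j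

/-- `l` is the length of some return word to `z` in `w`. -/
def IsReturnLength (w : ℕ → A) (z : List A) (l : ℕ) : Prop :=
  ∃ r : List A, IsReturnWord w z r ∧ r.length = l

/-- The maximal return time of `z` in `w`. -/
noncomputable def maxReturnTime (w : ℕ → A) (z : List A) : ℕ :=
  sSup {l : ℕ | IsReturnLength w z l}

/-- A finite word is unbordered if no proper nonempty prefix of it is also a suffix. -/
def Unbordered (z : List A) : Prop :=
  ∀ b : List A, b ≠ [] → b.length < z.length → b <+: z → ¬ b <:+ z

/-- A finite word is primitive if it is not a (trivial or nontrivial) power of a word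
other than itself. -/
def Primitive (z : List A) : Prop :=
  ∀ (v : List A) (k : ℕ), z = wpow v k → k = 1

/-- A finite word is Lyndon if it is primitive and lexicographically minimal among its
conjugates: `z ≤ yx` for every factorization `z = xy`. -/
def IsLyndon [LinearOrder A] (z : List A) : Prop :=
  Primitive z ∧ ∀ x y : List A, z = x ++ y → z ≤ y ++ x

end PeriodicityComplexity

namespace PeriodicityComplexity

variable {A : Type*}

/-- The words `u_0 = ε`, `u_i = u_{i-1} a (u_{i-1} b)^{n_i} u_{i-1}` of the generalized
Toeplitz construction. -/
def uSeq (a b : A) (nseq : ℕ → ℕ) : ℕ → List A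
  | 0 => []
  | i + 1 =>
      uSeq a b nseq i ++ [a] ++ wpow (uSeq a b nseq i ++ [b]) (nseq (i + 1)) ++ uSeq a b nseq i

end PeriodicityComplexity

open PeriodicityComplexity

/-!
Write `L_i = |u_i| + 1` and `N_i = n_{i+1} + 2`, so that `L_{i+1} = N_i L_i`. Unfolding
`u_{i+1} = u_i a (u_i b)^{n_{i+1}} u_i` shows that `u_i` occurs in `U` at every multiple `k L_i`,
followed by the letter `a` when `k ≡ 0` and by `b` when `k ≡ 1, …, n_{i+1} (mod N_i)`.

Upper bound: `U` begins with `u_i a (u_i b)^{n_{i+1}} u_i a u_i`, where `u_i a u_i` occurs at `0`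
and at `(n_{i+1} + 1) L_i`; as `d_{i+1} = L_i + d_i ≤ L_i + |u_i|`, this is a local period at
`d_{i+1}`.

Lower bound, by induction on `i`. An `a` followed by the prefix of length `d_i` of `U` must be
the letter just before a multiple of `L_i` (inductively it is one for `L_{i-1}`, and the residues
modulo `N_{i-1}` leave only the multiples of `L_i`). Hence a local period
`d_i < q < (n_{i+1} + 1) L_i` at `d_{i+1}` is a multiple `c L_i` with `1 ≤ c ≤ n_{i+1}`; but then
the letter at `|u_i| + q` is `b`, not `a`. A local period `q ≤ d_i` at `d_{i+1}` is moved back by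
`L_i` to one at `d_i`.
-/

namespace PeriodicityComplexity

variable {A : Type*}

section Occurrences

variable {w : ℕ → A}

lemma occursAt_iff {z : List A} {m : ℕ} :
    OccursAt w z m ↔ ∀ t (ht : t < z.length), z[t] = w (m + t) := by
  constructor
  · intro h t ht
    simpa using List.get_of_eq h ⟨t, ht⟩
  · intro h
    exact List.ext_getElem (by simp) fun t h₁ _ => by simp [h t h₁]

lemma OccursAt.getElem?_eq {z : List A} {m t : ℕ} (h : OccursAt w z m) (ht : t < z.length) :
    z[t]? = some (w (m + t)) := by
  rw [List.getElem?_eq_getElem ht, occursAt_iff.mp h t ht]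

lemma occursAt_ofFn (m q : ℕ) : OccursAt w (List.ofFn fun t : Fin q => w (m + t)) m :=
  occursAt_iff.mpr fun t ht => by simp

lemma occursAt_singleton_iff {c : A} {m : ℕ} : OccursAt w [c] m ↔ w m = c := by
  simp [occursAt_iff, eq_comm]

lemma occursAt_append {x y : List A} {m : ℕ} :
    OccursAt w (x ++ y) m ↔ OccursAt w x m ∧ OccursAt w y (m + x.length) := by
  simp only [occursAt_iff]
  constructor
  · intro h
    refine ⟨fun t ht => ?_, fun t ht => ?_⟩
    · rw [← List.getElem_append_left ht]
      exact h t (by simp; omega)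
    · have := h (x.length + t) (by simp; omega)
      rw [List.getElem_append_right (by omega)] at this
      simpa [Nat.add_assoc] using this
  · rintro ⟨hx, hy⟩ t ht
    rcases Nat.lt_or_ge t x.length with h | h
    · rw [List.getElem_append_left h, hx t h]
    · rw [List.getElem_append_right h, hy (t - x.length) (by simp at ht; omega)]
      congr 1
      omega

lemma occursAt_eq_of_occursAt {z : List A} {m m' t : ℕ} (h : OccursAt w z m)
    (h' : OccursAt w z m') (ht : t < z.length) : w (m + t) = w (m' + t) := by
  rw [← occursAt_iff.mp h t ht, occursAt_iff.mp h' t ht]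

lemma length_wpow (v : List A) (e : ℕ) : (wpow v e).length = e * v.length := by
  simp [wpow]

lemma wpow_succ (v : List A) (e : ℕ) : wpow v (e + 1) = v ++ wpow v e := by
  simp [wpow, List.replicate_succ]

lemma OccursAt.of_wpow {v : List A} {e m : ℕ} (h : OccursAt w (wpow v e) m) {k : ℕ}
    (hk : k < e) : OccursAt w v (m + k * v.length) := by
  induction e generalizing m k with
  | zero => omega
  | succ e ih =>
    rw [wpow_succ, occursAt_append] at h
    cases k with
    | zero => simpa using h.1
    | succ k => simpa [Nat.succ_mul, Nat.add_assoc, Nat.add_comm v.length] using ih h.2 (by omega)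

end Occurrences

section LocalPeriod

variable {w : ℕ → A}

/-- The truncated subtraction makes the window `[0, i)` when `q ≥ i`: this is the case where
the prefix of length `i` is a suffix of the repetition word. -/
def IsLocalPeriod (w : ℕ → A) (i q : ℕ) : Prop :=
  ∀ s, i - q ≤ s → s < i → w s = w (s + q)

lemma IsLocalPeriod.of_add {c i q N : ℕ} (hw : ∀ s < N, w (c + s) = w s) (hN : i + q ≤ N)
    (h : IsLocalPeriod w (c + i) q) : IsLocalPeriod w i q := fun s hs₁ hs₂ => by
  rw [← hw s (by omega), ← hw (s + q) (by omega), ← Nat.add_assoc]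
  exact h (c + s) (by omega) (by omega)

lemma getElem?_wordPrefix {i s : ℕ} (hs : s < i) : (wordPrefix w i)[s]? = some (w s) := by
  simp [wordPrefix, hs]

lemma exists_isRepWordAt_length_iff {i q : ℕ} :
    (∃ r, IsRepWordAt w i r ∧ r.length = q) ↔ 0 < q ∧ IsLocalPeriod w i q := by
  constructor
  · rintro ⟨r, ⟨hne, hcmp, hocc⟩, rfl⟩
    refine ⟨List.length_pos_iff.mpr hne, fun s hs₁ hs₂ => ?_⟩
    have hpre := getElem?_wordPrefix (w := w) hs₂
    rcases hcmp with ⟨x, hx⟩ | ⟨x, hx⟩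
    · have hlen : x.length + r.length = i := by simpa [wordPrefix] using congrArg List.length hx
      rw [← hx, List.getElem?_append_right (by omega), hocc.getElem?_eq (by omega)] at hpre
      rw [← Option.some_injective _ hpre]
      congr 1
      omega
    · have hlen : x.length + i = r.length := by simpa [wordPrefix] using congrArg List.length hx
      have hr := hocc.getElem?_eq (t := x.length + s) (by omega)
      rw [← hx, List.getElem?_append_right (by omega), Nat.add_sub_cancel_left, hpre] at hr
      rw [Option.some_injective _ hr]
      congr 1
      omega
  · rintro ⟨hq, hper⟩
    refine ⟨List.ofFn fun t : Fin q => w (i + t), ⟨?_, ?_, occursAt_ofFn i q⟩, by simp⟩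
    · simpa using hq.ne'
    rcases le_total q i with h | h
    · left
      have hdrop : (List.ofFn fun t : Fin q => w (i + t)) = (wordPrefix w i).drop (i - q) :=
        List.ext_getElem (by simp [wordPrefix]; omega) fun t _ ht => by
          simp only [List.getElem_ofFn, List.getElem_drop, wordPrefix]
          rw [hper (i - q + t) (by omega) (by simp [wordPrefix] at ht; omega)]
          congr 1
          omega
      exact hdrop ▸ List.drop_suffix _ _
    · right
      have hdrop : wordPrefix w i = (List.ofFn fun t : Fin q => w (i + t)).drop (q - i) :=
        List.ext_getElem (by simp [wordPrefix]; omega) fun t ht _ => by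
          simp only [List.getElem_ofFn, List.getElem_drop, wordPrefix]
          rw [hper t (by omega) (by simp [wordPrefix] at ht; omega)]
          congr 1
          omega
      exact hdrop ▸ List.drop_suffix _ _

lemma localPeriod_eq_of_isLocalPeriod {i q : ℕ} (hq : 0 < q) (hper : IsLocalPeriod w i q)
    (hmin : ∀ p, 0 < p → p < q → ¬ IsLocalPeriod w i p) : localPeriod w i = q := by
  refine IsLeast.csInf_eq ⟨?_, ?_⟩
  · obtain ⟨r, hr, hlen⟩ := exists_isRepWordAt_length_iff.mpr ⟨hq, hper⟩
    exact ⟨r, hr, by simp [hlen]⟩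
  · rintro _ ⟨r, hr, rfl⟩
    obtain ⟨hp, hper'⟩ := exists_isRepWordAt_length_iff.mp ⟨r, hr, rfl⟩
    by_contra hlt
    exact hmin _ hp (by simpa using not_le.mp hlt) hper'

end LocalPeriod

section Toeplitz

def blockLen (a b : A) (nseq : ℕ → ℕ) (i : ℕ) : ℕ := (uSeq a b nseq i).length + 1

/-- `towerLen a b nseq j` is the paper's `d_j = |u_{j-1} a u_{j-2} a ⋯ u_1 a a|` for `j ≥ 1`. -/
def towerLen (a b : A) (nseq : ℕ → ℕ) : ℕ → ℕ
  | 0 => 0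
  | i + 1 => blockLen a b nseq i + towerLen a b nseq i

variable {a b : A} {nseq : ℕ → ℕ}

lemma blockLen_succ (i : ℕ) :
    blockLen a b nseq (i + 1) = (nseq (i + 1) + 2) * blockLen a b nseq i := by
  simp only [blockLen, uSeq, List.length_append, List.length_singleton, length_wpow]
  ring

lemma towerLen_le_length (i : ℕ) : towerLen a b nseq i ≤ (uSeq a b nseq i).length := by
  induction i with
  | zero => simp [towerLen]
  | succ i ih =>
    have h := blockLen_succ (a := a) (b := b) (nseq := nseq) i
    simp only [towerLen, blockLen] at h ⊢
    nlinarith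

lemma two_mul_towerLen_lt (hpos : ∀ i, 1 ≤ i → 1 ≤ nseq i) (i : ℕ) :
    2 * towerLen a b nseq i < blockLen a b nseq i := by
  induction i with
  | zero => simp [towerLen, blockLen, uSeq]
  | succ i ih =>
    have h : 3 * blockLen a b nseq i ≤ blockLen a b nseq (i + 1) := by
      rw [blockLen_succ]
      exact Nat.mul_le_mul_right _ (by have := hpos (i + 1) (by omega); omega)
    simp only [towerLen]
    omega

lemma sum_length_add_one_add_one_eq_towerLen (i : ℕ) :
    ∑ t ∈ Finset.Icc 1 i, ((uSeq a b nseq t).length + 1) + 1 = towerLen a b nseq (i + 1) := by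
  induction i with
  | zero => simp [towerLen, blockLen, uSeq]
  | succ i ih =>
    rw [Finset.sum_Icc_succ_top (by omega), Nat.add_right_comm, ih]
    simp only [towerLen, blockLen]
    omega

lemma OccursAt.of_uSeq_succ {w : ℕ → A} {i m : ℕ} (h : OccursAt w (uSeq a b nseq (i + 1)) m) :
    OccursAt w (uSeq a b nseq i ++ [a]) m ∧
      (∀ r < nseq (i + 1),
        OccursAt w (uSeq a b nseq i ++ [b]) (m + (r + 1) * blockLen a b nseq i)) ∧
      OccursAt w (uSeq a b nseq i) (m + (nseq (i + 1) + 1) * blockLen a b nseq i) := by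
  simp only [uSeq, occursAt_append] at h
  obtain ⟨⟨⟨hu, ha⟩, hpow⟩, hlast⟩ := h
  refine ⟨occursAt_append.mpr ⟨hu, ha⟩, fun r hr => ?_, ?_⟩
  · convert hpow.of_wpow hr using 1
    simp only [blockLen, List.length_append, List.length_singleton]
    ring
  · convert hlast using 1
    simp only [blockLen, List.length_append, List.length_singleton, length_wpow]
    ring

lemma OccursAt.of_uSeq_succ_mul {w : ℕ → A} {i m r : ℕ}
    (h : OccursAt w (uSeq a b nseq (i + 1)) m) (hr : r ≤ nseq (i + 1) + 1) :
    OccursAt w (uSeq a b nseq i) (m + r * blockLen a b nseq i) := by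
  obtain ⟨h₀, hmid, hlast⟩ := h.of_uSeq_succ
  rcases Nat.eq_zero_or_pos r with rfl | hr₀
  · simpa using (occursAt_append.mp h₀).1
  rcases hr.lt_or_eq with hr₁ | rfl
  · obtain ⟨r, rfl⟩ : ∃ r', r = r' + 1 := ⟨r - 1, by omega⟩
    exact (occursAt_append.mp (hmid r (by omega))).1
  · exact hlast

lemma mul_blockLen_eq_div_add_mod (k i : ℕ) :
    k * blockLen a b nseq i = k / (nseq (i + 1) + 2) * blockLen a b nseq (i + 1)
      + k % (nseq (i + 1) + 2) * blockLen a b nseq i := by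
  conv_lhs => rw [← Nat.div_add_mod' k (nseq (i + 1) + 2)]
  rw [blockLen_succ]
  ring

variable {U : ℕ → A} (hU : ∀ i, OccursAt U (uSeq a b nseq i) 0)
include hU

lemma occursAt_uSeq_mul_blockLen (k i : ℕ) :
    OccursAt U (uSeq a b nseq i) (k * blockLen a b nseq i) := by
  induction k using Nat.strong_induction_on generalizing i with
  | _ k ih =>
    rcases Nat.eq_zero_or_pos k with rfl | hk
    · simpa using hU i
    have hdiv : k / (nseq (i + 1) + 2) < k := Nat.div_lt_self hk (by omega)
    rw [mul_blockLen_eq_div_add_mod]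
    exact (ih _ hdiv (i + 1)).of_uSeq_succ_mul (Nat.lt_succ_iff.mp (Nat.mod_lt _ (by omega)))

lemma apply_mul_blockLen_add (k i t : ℕ) (ht : t < (uSeq a b nseq i).length) :
    U (k * blockLen a b nseq i + t) = U t := by
  simpa using occursAt_eq_of_occursAt (occursAt_uSeq_mul_blockLen hU k i) (hU i) ht

lemma apply_mul_blockLen_add_length_of_mod_eq_zero {k i : ℕ} (hk : k % (nseq (i + 1) + 2) = 0) :
    U (k * blockLen a b nseq i + (uSeq a b nseq i).length) = a := by
  rw [mul_blockLen_eq_div_add_mod, hk, Nat.zero_mul, Nat.add_zero]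
  have h := (occursAt_uSeq_mul_blockLen hU (k / (nseq (i + 1) + 2)) (i + 1)).of_uSeq_succ.1
  exact occursAt_singleton_iff.mp (occursAt_append.mp h).2

lemma apply_mul_blockLen_add_length_of_mod_le {k i : ℕ} (hk₁ : 1 ≤ k % (nseq (i + 1) + 2))
    (hk₂ : k % (nseq (i + 1) + 2) ≤ nseq (i + 1)) :
    U (k * blockLen a b nseq i + (uSeq a b nseq i).length) = b := by
  obtain ⟨r, hr⟩ : ∃ r, k % (nseq (i + 1) + 2) = r + 1 := ⟨_, (Nat.sub_add_cancel hk₁).symm⟩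
  rw [mul_blockLen_eq_div_add_mod, hr]
  have h := (occursAt_uSeq_mul_blockLen hU (k / (nseq (i + 1) + 2)) (i + 1)).of_uSeq_succ.2.1 r
    (by omega)
  exact occursAt_singleton_iff.mp (occursAt_append.mp h).2

lemma mod_eq_zero_or_eq_of_apply_eq_a (hab : a ≠ b) {k i : ℕ}
    (h : U (k * blockLen a b nseq i + (uSeq a b nseq i).length) = a) :
    k % (nseq (i + 1) + 2) = 0 ∨ k % (nseq (i + 1) + 2) = nseq (i + 1) + 1 := by
  by_contra hne
  have hlt := Nat.mod_lt k (show 0 < nseq (i + 1) + 2 by omega)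
  exact hab (h.symm.trans (apply_mul_blockLen_add_length_of_mod_le hU (by omega) (by omega)))

lemma blockLen_dvd_of_apply_eq_a (hab : a ≠ b) (hpos : ∀ i, 1 ≤ i → 1 ≤ nseq i) {m : ℕ}
    (hm : U m = a) (i : ℕ) (hpre : ∀ t < towerLen a b nseq i, U (m + 1 + t) = U t) :
    blockLen a b nseq i ∣ m + 1 := by
  induction i with
  | zero => simp [blockLen, uSeq]
  | succ i ih =>
    obtain ⟨k, hk⟩ := ih fun t ht => hpre t (by simp only [towerLen]; omega)
    obtain ⟨j, rfl⟩ : ∃ j, k = j + 1 := ⟨k - 1, by cases k <;> simp_all⟩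
    simp only [blockLen] at hk
    have hj : U (j * blockLen a b nseq i + (uSeq a b nseq i).length) = a := by
      rw [show j * blockLen a b nseq i + (uSeq a b nseq i).length = m by
        simp only [blockLen]; linarith, hm]
    have hj' : U ((j + 1) * blockLen a b nseq i + (uSeq a b nseq i).length) = a := by
      have h0 := apply_mul_blockLen_add_length_of_mod_eq_zero hU (k := 0) (i := i) (by simp)
      rw [Nat.zero_mul, Nat.zero_add] at h0
      rw [show (j + 1) * blockLen a b nseq i + (uSeq a b nseq i).length
          = m + 1 + (uSeq a b nseq i).length by simp only [blockLen]; linarith,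
        hpre _ (by simp only [towerLen, blockLen]; omega), h0]
    have hsucc := Nat.add_mod_eq_ite (k := nseq (i + 1) + 2) (m := j) (n := 1)
    rw [Nat.one_mod_eq_one.mpr (by omega)] at hsucc
    have hn := hpos (i + 1) (by omega)
    have hdvd : nseq (i + 1) + 2 ∣ j + 1 := by
      apply Nat.dvd_of_mod_eq_zero
      rcases mod_eq_zero_or_eq_of_apply_eq_a hU hab hj with h | h <;>
        rcases mod_eq_zero_or_eq_of_apply_eq_a hU hab hj' with h' | h' <;>
        split_ifs at hsucc <;> omega
    obtain ⟨c, hc⟩ := hdvd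
    exact ⟨c, by rw [hk, blockLen_succ, blockLen, hc]; ring⟩

lemma not_isLocalPeriod_of_towerLen_lt (hab : a ≠ b) (hpos : ∀ i, 1 ≤ i → 1 ≤ nseq i) {i q : ℕ}
    (hq₁ : towerLen a b nseq i < q) (hq₂ : q < (nseq (i + 1) + 1) * blockLen a b nseq i) :
    ¬ IsLocalPeriod U (towerLen a b nseq (i + 1)) q := by
  intro hper
  have hD : towerLen a b nseq (i + 1) = blockLen a b nseq i + towerLen a b nseq i := rfl
  have hL : blockLen a b nseq i = (uSeq a b nseq i).length + 1 := rfl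
  have hle := towerLen_le_length (a := a) (b := b) (nseq := nseq) i
  have h0 := apply_mul_blockLen_add_length_of_mod_eq_zero hU (k := 0) (i := i) (by simp)
  rw [Nat.zero_mul, Nat.zero_add] at h0
  have ha : U ((uSeq a b nseq i).length + q) = a := by
    rw [← hper _ (by omega) (by omega), h0]
  have hpre : ∀ t < towerLen a b nseq i, U ((uSeq a b nseq i).length + q + 1 + t) = U t := by
    intro t ht
    rw [show (uSeq a b nseq i).length + q + 1 + t = blockLen a b nseq i + t + q by omega,
      ← hper _ (by omega) (by omega)]
    simpa using apply_mul_blockLen_add hU 1 i t (by omega)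
  obtain ⟨c, rfl⟩ : blockLen a b nseq i ∣ q := by
    have h := blockLen_dvd_of_apply_eq_a hU hab hpos ha i hpre
    rw [show (uSeq a b nseq i).length + q + 1 = blockLen a b nseq i + q by omega] at h
    exact (Nat.dvd_add_right dvd_rfl).mp h
  have hc : c < nseq (i + 1) + 1 := by
    rw [Nat.mul_comm] at hq₂
    exact Nat.lt_of_mul_lt_mul_right hq₂
  have hc₀ : 0 < c := Nat.pos_of_ne_zero fun h => by simp [h] at hq₁
  have hmod : c % (nseq (i + 1) + 2) = c := Nat.mod_eq_of_lt (by omega)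
  have hb := apply_mul_blockLen_add_length_of_mod_le hU (k := c) (i := i) (by omega) (by omega)
  rw [Nat.mul_comm, Nat.add_comm] at ha
  exact hab (ha.symm.trans hb)

lemma not_isLocalPeriod_towerLen_succ (hab : a ≠ b) (hpos : ∀ i, 1 ≤ i → 1 ≤ nseq i) (i : ℕ)
    {q : ℕ} (hq₁ : 0 < q) (hq₂ : q < (nseq (i + 1) + 1) * blockLen a b nseq i) :
    ¬ IsLocalPeriod U (towerLen a b nseq (i + 1)) q := by
  induction i generalizing q with
  | zero => exact not_isLocalPeriod_of_towerLen_lt hU hab hpos hq₁ hq₂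
  | succ i ih =>
    rcases lt_or_ge (towerLen a b nseq (i + 1)) q with hlt | hle
    · exact not_isLocalPeriod_of_towerLen_lt hU hab hpos hlt hq₂
    have h₁ := two_mul_towerLen_lt (a := a) (b := b) hpos (i + 1)
    have h₀ := two_mul_towerLen_lt (a := a) (b := b) hpos i
    have h₂ : 2 * blockLen a b nseq i ≤ (nseq (i + 1) + 1) * blockLen a b nseq i :=
      Nat.mul_le_mul_right _ (by have := hpos (i + 1) (by omega); omega)
    have hD : towerLen a b nseq (i + 1) = blockLen a b nseq i + towerLen a b nseq i := rfl
    -- `U` repeats its prefix `u_{i+1}` at distance `L_{i+1}`, which carries the window at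
    -- `d_{i+2} = L_{i+1} + d_{i+1}` back to the window at `d_{i+1}`.
    refine fun hper => ih hq₁ (by omega) (hper.of_add (N := (uSeq a b nseq (i + 1)).length)
      (fun s hs => by simpa using apply_mul_blockLen_add hU 1 (i + 1) s hs) ?_)
    simp only [blockLen] at h₁
    omega

lemma isLocalPeriod_towerLen_succ (i : ℕ) :
    IsLocalPeriod U (towerLen a b nseq (i + 1)) ((nseq (i + 1) + 1) * blockLen a b nseq i) := by
  intro s _ hs
  have hD : towerLen a b nseq (i + 1) = blockLen a b nseq i + towerLen a b nseq i := rfl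
  have hle := towerLen_le_length (a := a) (b := b) (nseq := nseq) i
  have hL : blockLen a b nseq (i + 1) =
      (nseq (i + 1) + 1) * blockLen a b nseq i + blockLen a b nseq i := by
    rw [blockLen_succ]; ring
  simp only [blockLen] at hD hL
  rcases lt_trichotomy s (uSeq a b nseq i).length with h | rfl | h
  · rw [Nat.add_comm]
    exact (apply_mul_blockLen_add hU _ i s h).symm
  · -- both letters are `a`: they follow the occurrences of `u_i` and of `u_{i+1}` at `0`
    have h₁ := apply_mul_blockLen_add_length_of_mod_eq_zero hU (k := 0) (i := i) (by simp)
    have h₂ := apply_mul_blockLen_add_length_of_mod_eq_zero hU (k := 0) (i := i + 1) (by simp)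
    rw [Nat.zero_mul, Nat.zero_add] at h₁ h₂
    rw [h₁, show (uSeq a b nseq i).length + (nseq (i + 1) + 1) * blockLen a b nseq i
      = (uSeq a b nseq (i + 1)).length by simp only [blockLen]; omega, h₂]
  · obtain ⟨t, rfl⟩ : ∃ t, s = blockLen a b nseq i + t := ⟨s - blockLen a b nseq i, by
      simp only [blockLen]; omega⟩
    have e₁ := apply_mul_blockLen_add hU 1 i t (by simp only [blockLen] at hs; omega)
    have e₂ := apply_mul_blockLen_add hU 1 (i + 1) t (by simp only [blockLen] at hs; omega)
    rw [Nat.one_mul] at e₁ e₂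
    rw [e₁, show blockLen a b nseq i + t + (nseq (i + 1) + 1) * blockLen a b nseq i
      = blockLen a b nseq (i + 1) + t by simp only [blockLen]; omega, e₂]

lemma localPeriod_towerLen_succ (hab : a ≠ b) (hpos : ∀ i, 1 ≤ i → 1 ≤ nseq i) (i : ℕ) :
    localPeriod U (towerLen a b nseq (i + 1)) =
      ((nseq (i + 1) + 1) * blockLen a b nseq i : ℕ) :=
  localPeriod_eq_of_isLocalPeriod (Nat.mul_pos (by omega) (by simp [blockLen]))
    (isLocalPeriod_towerLen_succ hU i) fun _ hp hlt =>
      not_isLocalPeriod_towerLen_succ hU hab hpos i hp hlt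

end Toeplitz

end PeriodicityComplexity

theorem toeplitz_localPeriod_general
    {A : Type*} (a b : A) (hab : a ≠ b)
    (nseq : ℕ → ℕ) (hpos : ∀ i, 1 ≤ i → 1 ≤ nseq i)
    (U : ℕ → A) (hU : ∀ i : ℕ, OccursAt U (uSeq a b nseq i) 0) :
    ∀ j : ℕ, 1 ≤ j →
      localPeriod U ((∑ t ∈ Finset.Icc 1 (j - 1), ((uSeq a b nseq t).length + 1)) + 1) =
        (((nseq j + 1) * ((uSeq a b nseq (j - 1)).length + 1) : ℕ) : ℝ≥0∞) := by
  intro j hj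
  obtain ⟨i, rfl⟩ : ∃ i, j = i + 1 := ⟨j - 1, by omega⟩
  rw [Nat.add_sub_cancel, sum_length_add_one_add_one_eq_towerLen]
  exact localPeriod_towerLen_succ hU hab hpos i

/-- In the generalized Toeplitz construction, the local period of `U` at
position `d_j = |u_{j-1} a u_{j-2} a ⋯ u_1 a a|` equals `(n_j + 1)(|u_{j-1}| + 1)` for every
`j ≥ 1`. -/
theorem toeplitz_localPeriod
    {A : Type*} (a b : A) (hab : a ≠ b)
    (nseq : ℕ → ℕ) (hpos : ∀ i, 1 ≤ i → 1 ≤ nseq i) (hn1 : 2 ≤ nseq 1)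
    (U : ℕ → A) (hU : ∀ i : ℕ, OccursAt U (uSeq a b nseq i) 0) :
    ∀ j : ℕ, 1 ≤ j →
      localPeriod U ((∑ t ∈ Finset.Icc 1 (j - 1), ((uSeq a b nseq t).length + 1)) + 1) =
        (((nseq j + 1) * ((uSeq a b nseq (j - 1)).length + 1) : ℕ) : ℝ≥0∞) :=
  toeplitz_localPeriod_general a b hab nseq hpos U hU
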